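/- arXiv:1209.0084 — 2 statements merged into one kernel-verified Lean document; each statement's English description precedes it below -/
import Mathlib

section
/- Let M be a finitely generated ℤⁿ-graded R-module that is positively g-determined, let 𝔓 be a Hilbert partition of H_M(X)_{⪯g} with induced Hilbert decomposition 𝔇(𝔓) : M ≅ ⊕_{i∈I} Rᵢ(−sᵢ) (I finite, sᵢ ⪯ g), and for each i ∈ I choose 0 ≠ mᵢ ∈ M_{sᵢ}. Then the following are equivalent: (1) M = ⊕_{i∈I} mᵢRᵢ is a Stanley decomposition of M; (2) for all i ∈ I one has Rᵢ ∩ Ann(mᵢ) = 0, and whenever Σ_{i∈I} mᵢ (Σ_{sᵢ + t_{i_j} ⪯ g} α_{i_j} X^{t_{i_j}}) = 0 with α_{i_j} ∈ K and X^{t_{i_j}} ∈ Rᵢ, all coefficients α_{i_j} vanish. -/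
open MvPolynomial

/-!  Setting: `R = K[X₁,…,Xₙ]` with the `ℤⁿ`-grading `deg Xᵢ = eᵢ`.  A multigraded
`R`-module is a module `M` over `MvPolynomial (Fin n) K` together with a family
`gr : (Fin n → ℤ) → Submodule K M` of `K`-subspaces forming a direct sum
decomposition of `M` (the class `DirectSum.Decomposition gr`) which is compatible
with the `R`-action (`GradedSMul gr`). -/

variable {K : Type*} [Field K] {n : ℕ} {M : Type*} [AddCommGroup M] [Module K M]
  [Module (MvPolynomial (Fin n) K) M] [IsScalarTower K (MvPolynomial (Fin n) K) M]

/-- The grading is compatible with the `R`-module structure: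
multiplication by `Xᵢ` maps `M_a` into `M_{a+eᵢ}`. -/
def GradedSMul (gr : (Fin n → ℤ) → Submodule K M) : Prop :=
  ∀ (i : Fin n) (a : Fin n → ℤ), ∀ x ∈ gr a,
    (MvPolynomial.X i : MvPolynomial (Fin n) K) • x ∈ gr (a + Pi.single i 1)

/-- `M` is positively `g`-determined: `M_a = 0` unless `a ∈ ℕⁿ`, and the
multiplication map `·Xᵢ : M_a → M_{a+eᵢ}` is bijective whenever `aᵢ ≥ gᵢ`. -/
def PosDetermined (gr : (Fin n → ℤ) → Submodule K M) (g : Fin n → ℤ) : Prop :=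
  (∀ a : Fin n → ℤ, ¬ (0 : Fin n → ℤ) ≤ a → gr a = ⊥) ∧
  ∀ (i : Fin n) (a : Fin n → ℤ), g i ≤ a i →
    (∀ x ∈ gr a, (MvPolynomial.X i : MvPolynomial (Fin n) K) • x = 0 → x = 0) ∧
    (∀ y ∈ gr (a + Pi.single i 1), ∃ x ∈ gr a,
      (MvPolynomial.X i : MvPolynomial (Fin n) K) • x = y)

/-- A Hilbert partition `𝔓 : H_M(X)_{⪯g} = Σᵢ Q[aⁱ,bⁱ](X)`: the intervals satisfy
`0 ⪯ aⁱ ⪯ bⁱ ⪯ g` and, in each degree `0 ⪯ c ⪯ g`, the coefficient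
`dim_K M_c` of `H_M(X)_{⪯g}` equals the number of `i` with `aⁱ ⪯ c ⪯ bⁱ`. -/
def IsHilbertPartition (gr : (Fin n → ℤ) → Submodule K M) (g : Fin n → ℤ)
    {r : ℕ} (a b : Fin r → Fin n → ℤ) : Prop :=
  (∀ i, (0 : Fin n → ℤ) ≤ a i ∧ a i ≤ b i ∧ b i ≤ g) ∧
  ∀ c : Fin n → ℤ, (0 : Fin n → ℤ) ≤ c → c ≤ g →
    Module.rank K ↥(gr c) =
      (((Finset.univ : Finset (Fin r)).filter
        fun i => (∀ j, a i j ≤ c j) ∧ (∀ j, c j ≤ b i j)).card : Cardinal)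

/-- `𝓖[a,b] = {c ∈ [a,b] : c_j = a_j for all j with b_j = g_j}`. -/
noncomputable def Gset {n : ℕ} (g a b : Fin n → ℤ) : Finset (Fin n → ℤ) :=
  (Finset.Icc a b).filter fun c => ∀ j, b j = g j → c j = a j

/-- `Z_b = {j : b_j = g_j}`. -/
def Zset {n : ℕ} (g b : Fin n → ℤ) : Finset (Fin n) :=
  Finset.univ.filter fun j => b j = g j

/-- `ρ(b) = |Z_b|`. -/
def rho {n : ℕ} (g b : Fin n → ℤ) : ℕ := (Zset g b).card

/-- A Hilbert decomposition `M ≅ ⊕_{i∈I} K[Zᵢ](−sᵢ)` as multigraded `K`-vector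
spaces: in each degree `c ∈ ℤⁿ`, `dim_K M_c` equals the number of indices `i`
with `sᵢ ⪯ c` and `c_j = (sᵢ)_j` for all `j ∉ Zᵢ`. -/
def IsHilbertDecomp (gr : (Fin n → ℤ) → Submodule K M)
    {ι : Type*} [Fintype ι] (Z : ι → Finset (Fin n)) (s : ι → Fin n → ℤ) : Prop :=
  ∀ c : Fin n → ℤ, Module.rank K ↥(gr c) =
    (((Finset.univ : Finset ι).filter
      fun i => (∀ j, s i j ≤ c j) ∧ (∀ j, j ∉ Z i → c j = s i j)).card : Cardinal)

/-- The multigraded `K`-vector subspace `x·K[Z] ⊆ M`. -/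
def stanleySpace (K : Type*) [Field K] {n : ℕ} {M : Type*} [AddCommGroup M]
    [Module K M] [Module (MvPolynomial (Fin n) K) M]
    (x : M) (Z : Finset (Fin n)) : Submodule K M :=
  Submodule.span K
    ((fun t : Fin n →₀ ℕ => (MvPolynomial.monomial t (1 : K)) • x) ''
      {t : Fin n →₀ ℕ | ∀ j ∉ Z, t j = 0})

/-- A Stanley decomposition `M = ⊕_{i∈I} mᵢK[Zᵢ]` of `M`: the `mᵢ` are homogeneous
of degree `sᵢ`, `K[Zᵢ] ∩ Ann(mᵢ) = 0`, and `M` is the direct sum of the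
multigraded subspaces `mᵢK[Zᵢ]`. -/
def IsStanleyDecomp (gr : (Fin n → ℤ) → Submodule K M)
    {ι : Type*} [Fintype ι] (Z : ι → Finset (Fin n)) (s : ι → Fin n → ℤ)
    (m : ι → M) : Prop :=
  (∀ i, m i ∈ gr (s i)) ∧
  (∀ i, ∀ q ∈ MvPolynomial.supported K (↑(Z i) : Set (Fin n)), q • m i = 0 → q = 0) ∧
  (iSupIndep fun i => stanleySpace K (m i) (Z i)) ∧
  (⨆ i, stanleySpace K (m i) (Z i)) = ⊤

/-!
A relation `∑ₚ qₚ mₚ = 0` with `qₚ ∈ K[Zₚ]` splits into homogeneous components, and its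
component of degree `c` is a `K`-linear relation among the elements `X^{c - sₚ} mₚ`, one for
each summand `K[Zₚ](-sₚ)` of `𝔇(𝔓)` that lives in degree `c`. For `c ⪯ g` the hypothesis says
that these are linearly independent. For any other `c`, multiplication by `X^{c - c ⊓ g}` maps
`M_{c ⊓ g}` isomorphically onto `M_c` because `M` is positively `g`-determined, and the
summands living in degrees `c` and `c ⊓ g` are the same because `sₚ ⪯ g` with strict inequality
outside `Zₚ`; so the elements are independent in every degree, and the sum of the Stanley spaces
is direct. The same isomorphism extends the count `dim M_c = #{summands in degree c}` from
`c ⪯ g`, where the Hilbert partition gives it, to all `c`. Hence in every degree the independent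
elements form a basis of `M_c`, and the Stanley spaces span `M`.
-/

universe u

theorem Finsupp.induction_add_single_one {σ : Type*} {motive : (σ →₀ ℕ) → Prop}
    (zero : motive 0) (add_single : ∀ t j, motive t → motive (t + Finsupp.single j 1))
    (t : σ →₀ ℕ) : motive t := by
  refine Finsupp.induction₂ t zero fun j k t _ _ ht => ?_
  have key : ∀ k, motive (t + Finsupp.single j k) := by
    intro k
    induction k with
    | zero => simpa using ht
    | succ k ih => simpa [Finsupp.single_add, add_assoc] using add_single _ j ih
  exact key k

theorem LinearMap.rank_eq_of_bijOn {R : Type*} {E F : Type u} [Ring R] [AddCommGroup E]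
    [Module R E] [AddCommGroup F] [Module R F] {f : E →ₗ[R] F} {V : Submodule R E}
    {W : Submodule R F}
    (h : Set.BijOn f V W) : Module.rank R V = Module.rank R W :=
  (LinearEquiv.ofBijective (f.restrict h.mapsTo) h.bijective).rank_eq

def toIntVec (t : Fin n →₀ ℕ) : Fin n → ℤ := fun j => t j

@[simp] lemma toIntVec_apply (t : Fin n →₀ ℕ) (j : Fin n) : toIntVec t j = t j := rfl

@[simp] lemma toIntVec_zero : toIntVec (0 : Fin n →₀ ℕ) = 0 := by
  ext; simp

lemma toIntVec_add_single (t : Fin n →₀ ℕ) (j : Fin n) :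
    toIntVec (t + Finsupp.single j 1) = toIntVec t + Pi.single j 1 := by
  ext k
  rcases eq_or_ne k j with rfl | hkj <;> simp [*]

/-- The exponent of `X^{c - s}`; the truncating `Int.toNat` makes it meaningful only for
`s ≤ c`. -/
noncomputable def expDiff (s c : Fin n → ℤ) : Fin n →₀ ℕ :=
  Finsupp.equivFunOnFinite.symm fun j => (c j - s j).toNat

@[simp] lemma expDiff_apply (s c : Fin n → ℤ) (j : Fin n) :
    expDiff s c j = (c j - s j).toNat := rfl

lemma add_toIntVec_expDiff {s c : Fin n → ℤ} (h : s ≤ c) : s + toIntVec (expDiff s c) = c := by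
  ext j; have : s j ≤ c j := h j; simp; omega

lemma expDiff_add_toIntVec (s : Fin n → ℤ) (t : Fin n →₀ ℕ) :
    expDiff s (s + toIntVec t) = t := by
  ext j; simp

lemma expDiff_eq_add {s d c : Fin n → ℤ} (hsd : s ≤ d) (hdc : d ≤ c) :
    expDiff s c = expDiff d c + expDiff s d := by
  ext j; have : s j ≤ d j := hsd j; have : d j ≤ c j := hdc j; simp; omega

section Multigraded

variable {M : Type*} [AddCommGroup M] [Module K M] [Module (MvPolynomial (Fin n) K) M]
  {gr : (Fin n → ℤ) → Submodule K M}

theorem GradedSMul.monomial_smul_mem (hsmul : GradedSMul gr) (t : Fin n →₀ ℕ)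
    {c : Fin n → ℤ} {x : M} (hx : x ∈ gr c) :
    (monomial t (1 : K) : MvPolynomial (Fin n) K) • x ∈ gr (c + toIntVec t) := by
  induction t using Finsupp.induction_add_single_one generalizing c x with
  | zero => simpa using hx
  | add_single t j ih =>
    rw [monomial_add_single, pow_one, mul_smul, toIntVec_add_single, add_comm (toIntVec t),
      ← add_assoc]
    exact ih (hsmul j c x hx)

theorem PosDetermined.bijOn_X_smul (hsmul : GradedSMul gr) {g : Fin n → ℤ}
    (hM : PosDetermined gr g) {j : Fin n} {d : Fin n → ℤ} (hj : g j ≤ d j) :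
    Set.BijOn ((X j : MvPolynomial (Fin n) K) • · : M → M) (gr d) (gr (d + Pi.single j 1)) := by
  refine ⟨fun x hx => hsmul j d x hx, fun x hx y hy hxy => ?_, fun y hy => (hM.2 j d hj).2 y hy⟩
  rw [← sub_eq_zero]
  refine (hM.2 j d hj).1 _ (sub_mem hx hy) ?_
  simp only [smul_sub, hxy, sub_self]

theorem PosDetermined.bijOn_monomial_smul (hsmul : GradedSMul gr) {g : Fin n → ℤ}
    (hM : PosDetermined gr g) (t : Fin n →₀ ℕ) {d : Fin n → ℤ}
    (ht : ∀ j, t j ≠ 0 → g j ≤ d j) :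
    Set.BijOn ((monomial t (1 : K) : MvPolynomial (Fin n) K) • · : M → M)
      (gr d) (gr (d + toIntVec t)) := by
  induction t using Finsupp.induction_add_single_one generalizing d with
  | zero =>
    simp only [monomial_zero', C_1, one_smul, toIntVec_zero, add_zero]
    exact Set.bijOn_id _
  | add_single t j ih =>
    have hj : g j ≤ d j := ht j (by simp)
    have ih' := ih (d := d + Pi.single j 1) fun k hk =>
      (ht k (by simp [hk])).trans
        ((le_add_of_nonneg_right (Pi.single_nonneg.2 zero_le_one) : d ≤ d + Pi.single j 1) k)
    rw [toIntVec_add_single, add_comm (toIntVec t), ← add_assoc]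
    convert ih'.comp (hM.bijOn_X_smul hsmul hj) using 1
    ext x
    simp [monomial_add_single, mul_smul]

theorem PosDetermined.rank_eq_rank_inf [IsScalarTower K (MvPolynomial (Fin n) K) M]
    (hsmul : GradedSMul gr) {g : Fin n → ℤ}
    (hM : PosDetermined gr g) (c : Fin n → ℤ) :
    Module.rank K (gr c) = Module.rank K (gr (c ⊓ g)) := by
  have hbij := hM.bijOn_monomial_smul (K := K) hsmul (expDiff (c ⊓ g) c) (d := c ⊓ g)
    fun j hj => by simp at hj ⊢; omega
  rw [add_toIntVec_expDiff inf_le_left] at hbij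
  exact (LinearMap.rank_eq_of_bijOn (f := DistribSMul.toLinearMap K M _) hbij).symm

end Multigraded

theorem MvPolynomial.monomial_mem_supported {σ R : Type*} [CommSemiring R] {S : Set σ}
    {t : σ →₀ ℕ} (ht : ∀ j ∉ S, t j = 0) (a : R) : monomial t a ∈ supported R S := by
  rcases eq_or_ne a 0 with rfl | ha
  · simp
  · rw [mem_supported, vars_monomial ha]
    intro j hj
    by_contra hjS
    exact Finsupp.mem_support_iff.1 hj (ht j hjS)

theorem MvPolynomial.exponent_eq_zero_of_mem_supported {σ R : Type*} [CommSemiring R]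
    {S : Set σ} {q : MvPolynomial σ R} (hq : q ∈ supported R S) {t : σ →₀ ℕ}
    (ht : t ∈ q.support) {j : σ} (hj : j ∉ S) : t j = 0 := by
  by_contra htj
  exact hj (mem_supported.1 hq ((mem_vars_iff_mem_support j).2
    ⟨t, ht, Finsupp.mem_support_iff.2 htj⟩))

section Summands

variable {ι : Type*} [Fintype ι] {Z : ι → Finset (Fin n)} {s : ι → Fin n → ℤ}

/-- The summands `K[Zₚ](-sₚ)` of a Hilbert decomposition that are nonzero in degree `c`. -/
def summandsAt (Z : ι → Finset (Fin n)) (s : ι → Fin n → ℤ) (c : Fin n → ℤ) : Finset ι :=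
  Finset.univ.filter fun i => (∀ j, s i j ≤ c j) ∧ (∀ j, j ∉ Z i → c j = s i j)

lemma mem_summandsAt {c : Fin n → ℤ} {p : ι} :
    p ∈ summandsAt Z s c ↔ s p ≤ c ∧ ∀ j ∉ Z p, c j = s p j := by
  simp [summandsAt, Pi.le_def]

lemma isHilbertDecomp_iff {M : Type*} [AddCommGroup M] [Module K M]
    [Module (MvPolynomial (Fin n) K) M] {gr : (Fin n → ℤ) → Submodule K M} :
    IsHilbertDecomp gr Z s ↔ ∀ c, Module.rank K (gr c) = (summandsAt Z s c).card :=
  Iff.rfl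

lemma summandsAt_eq_empty (hs : ∀ p, 0 ≤ s p) {c : Fin n → ℤ} (hc : ¬ 0 ≤ c) :
    summandsAt Z s c = ∅ :=
  Finset.eq_empty_of_forall_notMem fun p hp => hc ((hs p).trans (mem_summandsAt.1 hp).1)

lemma summandsAt_inf {g : Fin n → ℤ} (hsg : ∀ p, s p ≤ g) (hZ : ∀ p, ∀ j ∉ Z p, s p j < g j)
    (c : Fin n → ℤ) : summandsAt Z s (c ⊓ g) = summandsAt Z s c := by
  ext p
  simp only [mem_summandsAt, le_inf_iff, hsg p, and_true, Pi.inf_apply]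
  refine and_congr_right fun _ => forall₂_congr fun j hj => ?_
  have := hZ p j hj
  omega

lemma coeff_expDiff_eq_zero {Z : Finset (Fin n)} {q : MvPolynomial (Fin n) K}
    (hq : q ∈ supported K (Z : Set (Fin n))) {s c : Fin n → ℤ} (hsc : s ≤ c)
    (hc : ¬ ∀ j ∉ Z, c j = s j) : q.coeff (expDiff s c) = 0 := by
  obtain ⟨j, hjZ, hj⟩ : ∃ j ∉ Z, c j ≠ s j := by simpa using hc
  by_contra h
  have h0 := exponent_eq_zero_of_mem_supported hq (mem_support_iff.2 h) hjZ
  have : s j ≤ c j := hsc j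
  rw [expDiff_apply] at h0
  omega

end Summands

section StanleySpaces

variable {M : Type*} [AddCommGroup M] [Module K M] [Module (MvPolynomial (Fin n) K) M]
  [IsScalarTower K (MvPolynomial (Fin n) K) M]

lemma monomial_smul_eq_smul (t : Fin n →₀ ℕ) (α : K) (x : M) :
    (monomial t α : MvPolynomial (Fin n) K) • x = α • (monomial t (1 : K) • x) := by
  rw [← smul_assoc, smul_monomial, smul_eq_mul, mul_one]

theorem mem_stanleySpace_iff {x y : M} {Z : Finset (Fin n)} :
    y ∈ stanleySpace K x Z ↔ ∃ q ∈ supported K (Z : Set (Fin n)), q • x = y := by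
  constructor
  · intro hy
    induction hy using Submodule.span_induction with
    | mem y hy =>
      obtain ⟨t, ht, rfl⟩ := hy
      exact ⟨_, monomial_mem_supported ht 1, rfl⟩
    | zero => exact ⟨0, zero_mem _, zero_smul _ _⟩
    | add y z _ _ hy hz =>
      obtain ⟨qy, hqy, rfl⟩ := hy
      obtain ⟨qz, hqz, rfl⟩ := hz
      exact ⟨qy + qz, add_mem hqy hqz, add_smul _ _ _⟩
    | smul α y _ hy =>
      obtain ⟨q, hq, rfl⟩ := hy
      exact ⟨α • q, Subalgebra.smul_mem _ hq α, smul_assoc _ _ _⟩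
  · rintro ⟨q, hq, rfl⟩
    rw [q.as_sum, Finset.sum_smul]
    refine Submodule.sum_mem _ fun t ht => ?_
    rw [monomial_smul_eq_smul]
    exact Submodule.smul_mem _ _ (Submodule.subset_span
      ⟨t, fun j hj => exponent_eq_zero_of_mem_supported hq ht hj, rfl⟩)

variable {ι : Type*} [Fintype ι] {Z : ι → Finset (Fin n)} {m : ι → M}

theorem iSupIndep_stanleySpace
    (h : ∀ q : ι → MvPolynomial (Fin n) K, (∀ p, q p ∈ supported K (Z p : Set (Fin n))) →
      ∑ p, q p • m p = 0 → ∀ p, q p = 0) :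
    iSupIndep fun p => stanleySpace K (m p) (Z p) := by
  classical
  rw [iSupIndep_iff_finsetSum_eq_zero_imp_eq_zero]
  intro S v hv hsum p hp
  have hlift : ∀ p, ∃ q ∈ supported K (Z p : Set (Fin n)), q • m p = if p ∈ S then v p else 0 := by
    intro p
    split_ifs with h
    · exact mem_stanleySpace_iff.1 (hv p h)
    · exact ⟨0, zero_mem _, zero_smul _ _⟩
  choose q hq hqv using hlift
  have hq0 := h q hq (by simp only [hqv, Finset.sum_ite_mem, Finset.univ_inter, hsum])
  simpa [hp, hq0] using (hqv p).symm

theorem IsStanleyDecomp.eq_zero_of_sum_smul_eq_zero {gr : (Fin n → ℤ) → Submodule K M}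
    {s : ι → Fin n → ℤ} (h : IsStanleyDecomp gr Z s m) {q : ι → MvPolynomial (Fin n) K}
    (hq : ∀ p, q p ∈ supported K (Z p : Set (Fin n))) (hsum : ∑ p, q p • m p = 0) (p : ι) :
    q p = 0 := by
  have hzero := (iSupIndep_iff_finsetSum_eq_zero_imp_eq_zero _).1 h.2.2.1 Finset.univ
    (fun p => q p • m p) (fun p _ => mem_stanleySpace_iff.2 ⟨q p, hq p, rfl⟩) hsum
  exact h.2.1 p (q p) (hq p) (hzero p (Finset.mem_univ p))

end StanleySpaces

section DegreeFamily

variable {M : Type*} [AddCommGroup M] [Module K M] [Module (MvPolynomial (Fin n) K) M]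
  {gr : (Fin n → ℤ) → Submodule K M}
  {ι : Type*} [Fintype ι] {Z : ι → Finset (Fin n)} {s : ι → Fin n → ℤ} {m : ι → M}

variable (K) in
/-- For `p ∈ summandsAt Z s c` this spans the degree-`c` part of the Stanley space `mₚ K[Zₚ]`. -/
noncomputable def degreeFamily (s : ι → Fin n → ℤ) (m : ι → M) (c : Fin n → ℤ) (p : ι) : M :=
  (monomial (expDiff (s p) c) (1 : K) : MvPolynomial (Fin n) K) • m p

lemma degreeFamily_mem (hsmul : GradedSMul gr) (hm : ∀ p, m p ∈ gr (s p)) {c : Fin n → ℤ}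
    {p : ι} (hp : p ∈ summandsAt Z s c) : degreeFamily K s m c p ∈ gr c := by
  have := hsmul.monomial_smul_mem (K := K) (expDiff (s p) c) (hm p)
  rwa [add_toIntVec_expDiff (mem_summandsAt.1 hp).1] at this

lemma degreeFamily_mem_stanleySpace {c : Fin n → ℤ} {p : ι} (hp : p ∈ summandsAt Z s c) :
    degreeFamily K s m c p ∈ stanleySpace K (m p) (Z p) :=
  Submodule.subset_span ⟨_, fun j hj => by simp [(mem_summandsAt.1 hp).2 j hj], rfl⟩

open Classical in
theorem GradedSMul.decompose_smul_apply [IsScalarTower K (MvPolynomial (Fin n) K) M]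
    [DirectSum.Decomposition gr] (hsmul : GradedSMul gr)
    {d : Fin n → ℤ} {x : M} (hx : x ∈ gr d) (q : MvPolynomial (Fin n) K) (c : Fin n → ℤ) :
    (DirectSum.decompose gr (q • x) c : M) =
      if d ≤ c then q.coeff (expDiff d c) • ((monomial (expDiff d c) (1 : K)) • x) else 0 := by
  classical
  have hterm : ∀ t, (DirectSum.decompose gr (monomial t (q.coeff t) • x) c : M) =
      if t = expDiff d c ∧ d ≤ c then q.coeff t • (monomial t (1 : K) • x) else 0 := by
    intro t
    have hmem := Submodule.smul_mem _ (q.coeff t) (hsmul.monomial_smul_mem t hx)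
    rw [monomial_smul_eq_smul]
    split_ifs with h
    · obtain ⟨rfl, hdc⟩ := h
      rw [add_toIntVec_expDiff hdc] at hmem
      exact DirectSum.decompose_of_mem_same gr hmem
    · refine DirectSum.decompose_of_mem_ne gr hmem fun hc => h ⟨?_, ?_⟩
      · rw [← hc, expDiff_add_toIntVec]
      · rw [← hc]; exact le_add_of_nonneg_right fun j => by simp
  conv_lhs => rw [q.as_sum, Finset.sum_smul]
  rw [DirectSum.decompose_sum, DirectSum.sum_apply, Submodule.coe_sum]
  simp only [hterm]
  split_ifs with hdc
  · simp only [hdc, and_true, Finset.sum_ite_eq']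
    split_ifs with ht
    · rfl
    · rw [notMem_support_iff.1 ht, zero_smul]
  · simp [hdc]

theorem linearIndepOn_degreeFamily_of_le [IsScalarTower K (MvPolynomial (Fin n) K) M]
    {g : Fin n → ℤ}
    (hrel : ∀ f : ι → MvPolynomial (Fin n) K, (∀ p, f p ∈ supported K (Z p : Set (Fin n))) →
      (∀ p, ∀ t ∈ (f p).support, ∀ j, s p j + (t j : ℤ) ≤ g j) → ∑ p, f p • m p = 0 →
      ∀ p, f p = 0)
    {c : Fin n → ℤ} (hcg : c ≤ g) :
    LinearIndepOn K (degreeFamily K s m c) (summandsAt Z s c) := by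
  classical
  rw [linearIndepOn_finset_iff]
  intro α hα p hp
  let f : ι → MvPolynomial (Fin n) K := fun p =>
    if p ∈ summandsAt Z s c then monomial (expDiff (s p) c) (α p) else 0
  have hf_supp : ∀ p, f p ∈ supported K (Z p : Set (Fin n)) := by
    intro p
    by_cases hp : p ∈ summandsAt Z s c
    · simp only [f, hp, if_true]
      exact monomial_mem_supported (fun j hj => by simp [(mem_summandsAt.1 hp).2 j hj]) _
    · simp [f, hp]
  have hf_deg : ∀ p, ∀ t ∈ (f p).support, ∀ j, s p j + (t j : ℤ) ≤ g j := by
    intro p t ht j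
    by_cases hp : p ∈ summandsAt Z s c
    · have hsc : s p j ≤ c j := (mem_summandsAt.1 hp).1 j
      have hcg : c j ≤ g j := hcg j
      simp only [f, hp, if_true] at ht
      rw [Finset.mem_singleton.1 (support_monomial_subset ht), expDiff_apply]
      omega
    · simp [f, hp] at ht
  have hf_sum : ∑ p, f p • m p = 0 := by
    simp only [f, ite_smul, zero_smul, Finset.sum_ite_mem, Finset.univ_inter]
    rw [← hα]
    exact Finset.sum_congr rfl fun p _ => monomial_smul_eq_smul _ _ _
  simpa [f, hp] using hrel f hf_supp hf_deg hf_sum p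

theorem linearIndepOn_degreeFamily [IsScalarTower K (MvPolynomial (Fin n) K) M]
    (hsmul : GradedSMul gr) {g : Fin n → ℤ} (hM : PosDetermined gr g)
    (hm : ∀ p, m p ∈ gr (s p)) (hsg : ∀ p, s p ≤ g) (hZ : ∀ p, ∀ j ∉ Z p, s p j < g j)
    (hrel : ∀ f : ι → MvPolynomial (Fin n) K, (∀ p, f p ∈ supported K (Z p : Set (Fin n))) →
      (∀ p, ∀ t ∈ (f p).support, ∀ j, s p j + (t j : ℤ) ≤ g j) → ∑ p, f p • m p = 0 →
      ∀ p, f p = 0)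
    (c : Fin n → ℤ) : LinearIndepOn K (degreeFamily K s m c) (summandsAt Z s c) := by
  have hS := summandsAt_inf hsg hZ c
  have hd := linearIndepOn_degreeFamily_of_le hrel (inf_le_right : c ⊓ g ≤ g)
  rw [hS] at hd
  let f := DistribSMul.toLinearMap K M (monomial (expDiff (c ⊓ g) c) (1 : K))
  have hinj : Set.InjOn f (gr (c ⊓ g)) :=
    (hM.bijOn_monomial_smul hsmul _ fun j hj => by simp at hj ⊢; omega).injOn
  have hspan : Submodule.span K (degreeFamily K s m (c ⊓ g) '' summandsAt Z s c) ≤ gr (c ⊓ g) :=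
    Submodule.span_le.2 <| Set.image_subset_iff.2 fun p hp =>
      degreeFamily_mem hsmul hm (hS ▸ hp)
  refine (hd.map_injOn f (hinj.mono hspan)).congr fun p hp => ?_
  have hsp : s p ≤ c ⊓ g := (mem_summandsAt.1 (hS ▸ hp)).1
  simp only [Function.comp_apply, degreeFamily, f, DistribSMul.toLinearMap_apply, ← mul_smul,
    monomial_mul, mul_one, ← expDiff_eq_add hsp inf_le_left]

theorem eq_zero_of_sum_smul_eq_zero [IsScalarTower K (MvPolynomial (Fin n) K) M]
    [DirectSum.Decomposition gr] (hsmul : GradedSMul gr) (hm : ∀ p, m p ∈ gr (s p))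
    (hli : ∀ c, LinearIndepOn K (degreeFamily K s m c) (summandsAt Z s c))
    {q : ι → MvPolynomial (Fin n) K} (hq : ∀ p, q p ∈ supported K (Z p : Set (Fin n)))
    (hsum : ∑ p, q p • m p = 0) (p : ι) : q p = 0 := by
  classical
  ext t
  set c := s p + toIntVec t
  have hc : ∑ p' ∈ summandsAt Z s c, (q p').coeff (expDiff (s p') c) • degreeFamily K s m c p'
      = 0 := by
    have hdeg := congrArg (fun x => (DirectSum.decompose gr x c : M)) hsum
    simp only [DirectSum.decompose_sum, DirectSum.sum_apply, Submodule.coe_sum,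
      hsmul.decompose_smul_apply (hm _), DirectSum.decompose_zero, DirectSum.zero_apply,
      ZeroMemClass.coe_zero] at hdeg
    rw [← hdeg, summandsAt, Finset.sum_filter]
    refine Finset.sum_congr rfl fun p' _ => ?_
    by_cases hsc : s p' ≤ c
    · by_cases hZc : ∀ j ∉ Z p', c j = s p' j
      · rw [if_pos ⟨hsc, hZc⟩, if_pos hsc]
        rfl
      · rw [if_neg fun h => hZc h.2, if_pos hsc, coeff_expDiff_eq_zero (hq p') hsc hZc,
          zero_smul]
    · rw [if_neg fun h => hsc h.1, if_neg hsc]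
  rw [coeff_zero]
  have hsc : s p ≤ c := le_add_of_nonneg_right fun j => by simp
  by_cases hp : p ∈ summandsAt Z s c
  · simpa [c, expDiff_add_toIntVec] using linearIndepOn_finset_iff.1 (hli c) _ hc p hp
  · rw [← expDiff_add_toIntVec (s p) t]
    exact coeff_expDiff_eq_zero (hq p) hsc fun h => hp (mem_summandsAt.2 ⟨hsc, h⟩)

theorem iSup_stanleySpace_eq_top [DirectSum.Decomposition gr] (hsmul : GradedSMul gr)
    (hm : ∀ p, m p ∈ gr (s p))
    (hli : ∀ c, LinearIndepOn K (degreeFamily K s m c) (summandsAt Z s c))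
    (hH : IsHilbertDecomp gr Z s) :
    ⨆ p, stanleySpace K (m p) (Z p) = ⊤ := by
  rw [isHilbertDecomp_iff] at hH
  rw [eq_top_iff, ← (DirectSum.Decomposition.isInternal gr).submodule_iSup_eq_top]
  refine iSup_le fun c => ?_
  have : FiniteDimensional K (gr c) := Module.finite_of_rank_eq_nat (hH c)
  have hspan : Submodule.span K
      (Set.range fun p : (summandsAt Z s c : Set ι) => degreeFamily K s m c p) = gr c := by
    refine Submodule.eq_of_le_of_finrank_eq ?_ ?_
    · exact Submodule.span_le.2 <| Set.range_subset_iff.2 fun p => degreeFamily_mem hsmul hm p.2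
    · rw [finrank_span_eq_card (hli c), Module.finrank_eq_of_rank_eq (hH c)]
      simp
  rw [← hspan, Submodule.span_le]
  rintro _ ⟨p, rfl⟩
  exact Submodule.mem_iSup_of_mem p.1 (degreeFamily_mem_stanleySpace p.2)

end DegreeFamily

section Induced

variable {r : ℕ} {g : Fin n → ℤ} {a b : Fin r → Fin n → ℤ}

/-- The index set `I` of the induced Hilbert decomposition `𝔇(𝔓)`. -/
abbrev InducedIndex (g : Fin n → ℤ) (a b : Fin r → Fin n → ℤ) : Type :=
  Σ i : Fin r, {w // w ∈ Gset g (a i) (b i)}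

lemma mem_Gset {a b w : Fin n → ℤ} :
    w ∈ Gset g a b ↔ (a ≤ w ∧ w ≤ b) ∧ ∀ j, b j = g j → w j = a j := by
  simp [Gset, Finset.mem_Icc]

lemma mem_Zset {b : Fin n → ℤ} {j : Fin n} : j ∈ Zset g b ↔ b j = g j := by
  simp [Zset]

lemma InducedIndex.nonneg (hab : ∀ i, 0 ≤ a i ∧ a i ≤ b i ∧ b i ≤ g) (p : InducedIndex g a b) :
    0 ≤ (p.2 : Fin n → ℤ) :=
  (hab p.1).1.trans (mem_Gset.1 p.2.2).1.1

lemma InducedIndex.le (hab : ∀ i, 0 ≤ a i ∧ a i ≤ b i ∧ b i ≤ g) (p : InducedIndex g a b) :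
    (p.2 : Fin n → ℤ) ≤ g :=
  (mem_Gset.1 p.2.2).1.2.trans (hab p.1).2.2

lemma InducedIndex.lt (hab : ∀ i, 0 ≤ a i ∧ a i ≤ b i ∧ b i ≤ g) (p : InducedIndex g a b) :
    ∀ j ∉ Zset g (b p.1), (p.2 : Fin n → ℤ) j < g j := by
  intro j hj
  have hwb : (p.2 : Fin n → ℤ) j ≤ b p.1 j := (mem_Gset.1 p.2.2).1.2 j
  have hbg : b p.1 j ≤ g j := (hab p.1).2.2 j
  have hne : b p.1 j ≠ g j := mem_Zset.not.1 hj
  omega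

/-- Each interval `[aⁱ, bⁱ]` containing `c ≤ g` contributes exactly one summand in degree `c`:
the one with `w = c` off `Z_{bⁱ}` and `w = aⁱ` on it. -/
lemma card_summandsAt_induced (hab : ∀ i, 0 ≤ a i ∧ a i ≤ b i ∧ b i ≤ g) {c : Fin n → ℤ}
    (hcg : c ≤ g) :
    (summandsAt (fun p : InducedIndex g a b => Zset g (b p.1)) (fun p => p.2) c).card =
      (Finset.univ.filter fun i => (∀ j, a i j ≤ c j) ∧ ∀ j, c j ≤ b i j).card := by
  classical
  refine Finset.card_bij (fun p _ => p.1) ?_ ?_ ?_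
  · intro p hp
    obtain ⟨hwc, hcw⟩ := mem_summandsAt.1 hp
    obtain ⟨⟨haw, hwb⟩, -⟩ := mem_Gset.1 p.2.2
    refine Finset.mem_filter.2 ⟨Finset.mem_univ _, fun j => (haw j).trans (hwc j), fun j => ?_⟩
    by_cases hbg : b p.1 j = g j
    · exact hbg ▸ hcg j
    · exact (hcw j (mem_Zset.not.2 hbg)).symm ▸ hwb j
  · rintro ⟨i, w₁, hw₁⟩ hp₁ ⟨_, w₂, hw₂⟩ hp₂ rfl
    have hc₁ := (mem_summandsAt.1 hp₁).2
    have hc₂ := (mem_summandsAt.1 hp₂).2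
    simp only [Sigma.mk.injEq, heq_eq_eq, Subtype.mk.injEq, true_and]
    funext j
    by_cases hbg : b i j = g j
    · rw [(mem_Gset.1 hw₁).2 j hbg, (mem_Gset.1 hw₂).2 j hbg]
    · have h₁ : c j = w₁ j := hc₁ j (mem_Zset.not.2 hbg)
      have h₂ : c j = w₂ j := hc₂ j (mem_Zset.not.2 hbg)
      rw [← h₁, ← h₂]
  · intro i hi
    obtain ⟨-, hac, hcb⟩ := Finset.mem_filter.1 hi
    let w : Fin n → ℤ := fun j => if b i j = g j then a i j else c j
    have hw : w ∈ Gset g (a i) (b i) := by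
      refine mem_Gset.2 ⟨⟨fun j => ?_, fun j => ?_⟩, fun j hbg => if_pos hbg⟩
      · show a i j ≤ if b i j = g j then a i j else c j
        split_ifs
        exacts [le_rfl, hac j]
      · show (if b i j = g j then a i j else c j) ≤ b i j
        split_ifs
        exacts [(hab i).2.1 j, hcb j]
    refine ⟨⟨i, w, hw⟩, mem_summandsAt.2 ⟨fun j => ?_, fun j hj => ?_⟩, rfl⟩
    · by_cases hbg : b i j = g j <;> simp [w, hbg, hac j]
    · simp [w, mem_Zset.not.1 hj]

theorem isHilbertDecomp_induced {gr : (Fin n → ℤ) → Submodule K M} (hsmul : GradedSMul gr)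
    (hM : PosDetermined gr g) (hP : IsHilbertPartition gr g a b) :
    IsHilbertDecomp gr (fun p : InducedIndex g a b => Zset g (b p.1)) (fun p => p.2) := by
  have hle : ∀ c ≤ g, Module.rank K (gr c) =
      (summandsAt (fun p : InducedIndex g a b => Zset g (b p.1)) (fun p => p.2) c).card := by
    intro c hcg
    by_cases h0 : 0 ≤ c
    · rw [hP.2 c h0 hcg, card_summandsAt_induced hP.1 hcg]
    · rw [hM.1 c h0, summandsAt_eq_empty (InducedIndex.nonneg hP.1) h0]
      simp
  rw [isHilbertDecomp_iff]
  intro c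
  rw [hM.rank_eq_rank_inf hsmul, hle _ inf_le_right,
    summandsAt_inf (InducedIndex.le hP.1) (InducedIndex.lt hP.1)]

end Induced

theorem induced_decomposition_isStanley_iff_general
    (gr : (Fin n → ℤ) → Submodule K M) [DirectSum.Decomposition gr]
    (hsmul : GradedSMul gr)
    (g : Fin n → ℤ)
    (hM : PosDetermined gr g)
    {r : ℕ} (a b : Fin r → Fin n → ℤ)
    (hP : IsHilbertPartition gr g a b)
    (m : (Σ i : Fin r, {w // w ∈ Gset g (a i) (b i)}) → M)
    (hm : ∀ p, m p ∈ gr (p.2 : Fin n → ℤ)) :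
    IsStanleyDecomp gr (fun p => Zset g (b p.1)) (fun p => (p.2 : Fin n → ℤ)) m
      ↔
    ((∀ p, ∀ q ∈ MvPolynomial.supported K (↑(Zset g (b p.1)) : Set (Fin n)),
        q • m p = 0 → q = 0) ∧
      ∀ f : (Σ i : Fin r, {w // w ∈ Gset g (a i) (b i)}) → MvPolynomial (Fin n) K,
        (∀ p, f p ∈ MvPolynomial.supported K (↑(Zset g (b p.1)) : Set (Fin n))) →
        (∀ p, ∀ t ∈ (f p).support, ∀ j, ((p.2 : Fin n → ℤ) j) + (t j : ℤ) ≤ g j) →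
        (∑ p, f p • m p) = 0 → ∀ p, f p = 0) := by
  refine ⟨fun h => ⟨h.2.1, fun f hf _ hsum => h.eq_zero_of_sum_smul_eq_zero hf hsum⟩, ?_⟩
  rintro ⟨hann, hrel⟩
  have hli := linearIndepOn_degreeFamily hsmul hM hm (InducedIndex.le hP.1)
    (InducedIndex.lt hP.1) hrel
  exact ⟨hm, hann,
    iSupIndep_stanleySpace fun q hq hsum => eq_zero_of_sum_smul_eq_zero hsmul hm hli hq hsum,
    iSup_stanleySpace_eq_top hsmul hm hli (isHilbertDecomp_induced hsmul hM hP)⟩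

/-- **Proposition.**  Let `𝔓` be a Hilbert partition of `H_M(X)_{⪯g}` with induced
Hilbert decomposition `𝔇(𝔓) : M ≅ ⊕_{i∈I} Rᵢ(−sᵢ)`, where `I` is the (finite) set of
pairs `(i, c)` with `c ∈ 𝓖[aⁱ,bⁱ]`, `Rᵢ = K[Z_{bⁱ}]` and `sᵢ = c ⪯ g`, and for each
`i ∈ I` choose `0 ≠ mᵢ ∈ M_{sᵢ}`.  Then `M = ⊕_{i∈I} mᵢRᵢ` is a Stanley
decomposition of `M` if and only if `Rᵢ ∩ Ann(mᵢ) = 0` for all `i ∈ I` and the only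
relation `Σ_{i∈I} mᵢ (Σ_{sᵢ+t ⪯ g} α_t X^t) = 0` (with `α_t ∈ K`, `X^t ∈ Rᵢ`) is the
trivial one. -/
theorem induced_decomposition_isStanley_iff
    (gr : (Fin n → ℤ) → Submodule K M) [DirectSum.Decomposition gr]
    (hsmul : GradedSMul gr) [Module.Finite (MvPolynomial (Fin n) K) M]
    (g : Fin n → ℤ) (hg : (0 : Fin n → ℤ) ≤ g)
    (hM : PosDetermined gr g)
    {r : ℕ} (a b : Fin r → Fin n → ℤ)
    (hP : IsHilbertPartition gr g a b)
    (m : (Σ i : Fin r, {w // w ∈ Gset g (a i) (b i)}) → M)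
    (hm : ∀ p, m p ∈ gr (p.2 : Fin n → ℤ)) (hm0 : ∀ p, m p ≠ 0) :
    IsStanleyDecomp gr (fun p => Zset g (b p.1)) (fun p => (p.2 : Fin n → ℤ)) m
      ↔
    ((∀ p, ∀ q ∈ MvPolynomial.supported K (↑(Zset g (b p.1)) : Set (Fin n)),
        q • m p = 0 → q = 0) ∧
      ∀ f : (Σ i : Fin r, {w // w ∈ Gset g (a i) (b i)}) → MvPolynomial (Fin n) K,
        (∀ p, f p ∈ MvPolynomial.supported K (↑(Zset g (b p.1)) : Set (Fin n))) →
        (∀ p, ∀ t ∈ (f p).support, ∀ j, ((p.2 : Fin n → ℤ) j) + (t j : ℤ) ≤ g j) →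
        (∑ p, f p • m p) = 0 → ∀ p, f p = 0) :=
  induced_decomposition_isStanley_iff_general gr hsmul g hM a b hP m hm
end

section
/- Let M be a finitely generated ℤⁿ-graded R-module that is positively g-determined, and let 𝔉 be any Stanley decomposition of M. Then there exist a Hilbert partition 𝔓 of H_M(X)_{⪯g}, with induced Hilbert decomposition 𝔇(𝔓) : M ≅ ⊕_{i∈I} Rᵢ(−sᵢ), and nonzero homogeneous elements mᵢ ∈ M_{sᵢ} for i ∈ I, such that M = ⊕_{i∈I} mᵢRᵢ is a Stanley decomposition of M whose depth is at least the depth of 𝔉. -/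
open MvPolynomial

/-!  Setting: `R = K[X₁,…,Xₙ]` with the `ℤⁿ`-grading `deg Xᵢ = eᵢ`.  A multigraded
`R`-module is a module `M` over `MvPolynomial (Fin n) K` together with a family
`gr : (Fin n → ℤ) → Submodule K M` of `K`-subspaces forming a direct sum
decomposition of `M` (the class `DirectSum.Decomposition gr`) which is compatible
with the `R`-action (`GradedSMul gr`). -/

variable {K : Type*} [Field K] {n : ℕ} {M : Type*} [AddCommGroup M] [Module K M]
  [Module (MvPolynomial (Fin n) K) M] [IsScalarTower K (MvPolynomial (Fin n) K) M]

/-! A Stanley decomposition `M = ⊕ mᵢK[Zᵢ]` is the same thing as a homogeneous `K`-basis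
`{X^(d - sᵢ) mᵢ : d ∈ sᵢ + ℕ^Zᵢ}` of `M`, so it can be checked one degree at a time. In a
positively `g`-determined module, multiplication by `X^(d - c)` with `c = d ⊓ g` is an
isomorphism `M_c ≅ M_d`. Hence, after discarding the pieces with `sᵢ ⋠ g` and adding to each
`Zᵢ` the directions `j` with `(sᵢ)_j = g_j`, the basis elements of degree `d` are exactly the
images of the old basis elements of degree `c`: this is again a Stanley decomposition, and its
depth can only have grown. Its pieces are the intervals `[sᵢ, bᵢ]` with `(bᵢ)_j = g_j` for
`j ∈ Zᵢ` and `(bᵢ)_j = (sᵢ)_j` otherwise; then `𝓖[sᵢ, bᵢ] = {sᵢ}`, and counting basis elements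
in the degrees `0 ⪯ c ⪯ g` shows that these intervals form a Hilbert partition. -/

theorem Pi.le_induction_single {ι : Type*} [Fintype ι] [DecidableEq ι]
    {P : ∀ c d : ι → ℤ, c ≤ d → Prop} (refl : ∀ c, P c c le_rfl)
    (step : ∀ c d j (hcd : c ≤ d), c j < d j → ∀ hle : c + Pi.single j 1 ≤ d,
      P (c + Pi.single j 1) d hle → P c d hcd) :
    ∀ c d (hcd : c ≤ d), P c d hcd := by
  intro c d hcd
  have hnonneg : ∀ c : ι → ℤ, c ≤ d → ∀ j ∈ Finset.univ, 0 ≤ d j - c j :=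
    fun c hcd j _ => sub_nonneg.mpr (hcd j)
  obtain ⟨k, hk⟩ : ∃ k : ℕ, ∑ j, (d j - c j) = k :=
    ⟨_, (Int.toNat_of_nonneg (Finset.sum_nonneg (hnonneg c hcd))).symm⟩
  induction k generalizing c with
  | zero =>
    have hzero := (Finset.sum_eq_zero_iff_of_nonneg (hnonneg c hcd)).mp hk
    obtain rfl : c = d := funext fun j => by linarith [hzero j (Finset.mem_univ j)]
    exact refl c
  | succ k ih =>
    obtain ⟨j, hj⟩ : ∃ j, c j < d j := by
      by_contra! h
      have : ∑ j, (d j - c j) = 0 := Finset.sum_eq_zero fun j _ => by linarith [h j, hcd j]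
      omega
    have hle : c + Pi.single j 1 ≤ d := fun i => by
      rcases eq_or_ne i j with rfl | h <;> simp [*, hcd i]
    refine step c d j hcd hj hle (ih _ hle ?_)
    simp only [Pi.add_apply, sub_add_eq_sub_sub, Finset.sum_sub_distrib] at hk ⊢
    simp [hk]

theorem Pi.le_apply_of_inf_le_of_lt {ι : Type*} {c d g : ι → ℤ} {i : ι} (hg : d ⊓ g ≤ c)
    (hi : c i < d i) : g i ≤ c i := by
  have := hg i
  simp only [Pi.inf_apply] at this
  omega

section Fibers

variable {R V P κ : Type*} [Ring R] [AddCommGroup V] [Module R V]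
  {y : P → V} {φ : P → κ} {N : κ → Submodule R V}

theorem iSup_span_image_fiber (y : P → V) (φ : P → κ) :
    ⨆ k, Submodule.span R (y '' {p | φ p = k}) = Submodule.span R (Set.range y) := by
  rw [← Submodule.span_iUnion, ← Set.image_iUnion, ← Set.image_univ]
  congr
  ext p
  simp

theorem linearIndependent_of_iSupIndep (hN : iSupIndep N) (hy : ∀ p, y p ∈ N (φ p))
    (hfib : ∀ k, LinearIndepOn R y {p | φ p = k}) : LinearIndependent R y := by
  have hspan : ∀ k, Submodule.span R (Set.range fun p : {p // φ p = k} => y p) ≤ N k :=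
    fun k => Submodule.span_le.mpr (Set.range_subset_iff.mpr fun p => by simpa [p.2] using hy p)
  rw [← linearIndependent_equiv (Equiv.sigmaFiberEquiv φ)]
  exact linearIndependent_iUnion_finite hfib fun k t _ hkt =>
    (hN.disjoint_biSup hkt).mono (hspan k) (iSup₂_mono fun j _ => hspan j)

theorem span_image_fiber_eq (hN : iSupIndep N) (hy : ∀ p, y p ∈ N (φ p))
    (htop : Submodule.span R (Set.range y) = ⊤) (k : κ) :
    Submodule.span R (y '' {p | φ p = k}) = N k := by
  have hle : (fun k => Submodule.span R (y '' {p | φ p = k})) ≤ N := fun k =>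
    Submodule.span_le.mpr (Set.image_subset_iff.mpr fun p hp => hp ▸ hy p)
  exact congrFun ((hN.le_iff_eq_of_iSup_eq_top ((iSup_span_image_fiber y φ).trans htop)).mp hle) k

theorem iSupIndep_of_linearIndependent (hli : LinearIndependent R y)
    (hN : ∀ k, N k = Submodule.span R (y '' {p | φ p = k})) : iSupIndep N := by
  intro k
  have hle : ⨆ (j) (_ : j ≠ k), N j ≤ Submodule.span R (y '' {p | φ p ≠ k}) :=
    iSup₂_le fun j hj => (hN j).le.trans
      (Submodule.span_mono (Set.image_mono fun p (hp : φ p = j) => hp.trans_ne hj))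
  rw [hN k]
  refine (hli.disjoint_span_image ?_).mono_right hle
  exact Set.disjoint_left.mpr fun p (hp : φ p = k) (hp' : φ p ≠ k) => hp' hp

end Fibers

/-- `X^(d - c)`, with the exponent truncated at `0`: only meaningful for `c ≤ d`. -/
noncomputable def shiftMonomial (R : Type*) [CommSemiring R] {n : ℕ} (c d : Fin n → ℤ) :
    MvPolynomial (Fin n) R :=
  monomial (Finsupp.equivFunOnFinite.symm fun j => (d j - c j).toNat) 1

section ShiftMonomial

variable {R : Type*} [CommSemiring R] {c d e : Fin n → ℤ}

theorem shiftMonomial_mul (hcd : c ≤ d) (hde : d ≤ e) :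
    shiftMonomial R d e * shiftMonomial R c d = shiftMonomial R c e := by
  rw [shiftMonomial, shiftMonomial, shiftMonomial, monomial_mul, one_mul]
  refine congrArg (monomial · 1) (Finsupp.ext fun j => ?_)
  simp only [Finsupp.add_apply, Finsupp.coe_equivFunOnFinite_symm]
  have h1 : c j ≤ d j := hcd j
  have h2 : d j ≤ e j := hde j
  omega

theorem shiftMonomial_self (c : Fin n → ℤ) : shiftMonomial R c c = 1 := by
  rw [shiftMonomial, ← C_1, ← monomial_zero']
  exact congrArg (monomial · 1) (Finsupp.ext fun j => by simp)

theorem shiftMonomial_add_single (c : Fin n → ℤ) (j : Fin n) :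
    shiftMonomial R c (c + Pi.single j 1) = X j := by
  rw [shiftMonomial, X]
  refine congrArg (monomial · 1) (Finsupp.ext fun i => ?_)
  rcases eq_or_ne i j with rfl | h <;> simp [*]

theorem shiftMonomial_eq_mul_X {j : Fin n} (hle : c + Pi.single j 1 ≤ d) :
    shiftMonomial R c d = shiftMonomial R (c + Pi.single j 1) d * X j := by
  rw [← shiftMonomial_add_single c j, shiftMonomial_mul (le_add_of_nonneg_right ?_) hle]
  exact Pi.single_nonneg.mpr zero_le_one

end ShiftMonomial

section Graded

omit [IsScalarTower K (MvPolynomial (Fin n) K) M]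

variable {gr : (Fin n → ℤ) → Submodule K M} {g c d : Fin n → ℤ}

theorem shiftMonomial_smul_mem (hsmul : GradedSMul gr) (hcd : c ≤ d) {x : M} (hx : x ∈ gr c) :
    shiftMonomial K c d • x ∈ gr d := by
  induction c, d, hcd using Pi.le_induction_single generalizing x with
  | refl c => rwa [shiftMonomial_self, one_smul]
  | step c d j hcd hj hle ih =>
    rw [shiftMonomial_eq_mul_X hle, mul_smul]
    exact ih (hsmul j c x hx)

theorem eq_zero_of_shiftMonomial_smul_eq_zero (hsmul : GradedSMul gr) (hM : PosDetermined gr g)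
    (hcd : c ≤ d) (hg : d ⊓ g ≤ c) {x : M} (hx : x ∈ gr c)
    (h0 : shiftMonomial K c d • x = 0) : x = 0 := by
  induction c, d, hcd using Pi.le_induction_single generalizing x with
  | refl c => rwa [shiftMonomial_self, one_smul] at h0
  | step c d j hcd hj hle ih =>
    rw [shiftMonomial_eq_mul_X hle, mul_smul] at h0
    exact (hM.2 j c (Pi.le_apply_of_inf_le_of_lt hg hj)).1 x hx
      (ih (hg.trans (le_add_of_nonneg_right (Pi.single_nonneg.mpr zero_le_one)))
        (hsmul j c x hx) h0)

theorem exists_shiftMonomial_smul_eq (hM : PosDetermined gr g)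
    (hcd : c ≤ d) (hg : d ⊓ g ≤ c) {y : M} (hy : y ∈ gr d) :
    ∃ x ∈ gr c, shiftMonomial K c d • x = y := by
  induction c, d, hcd using Pi.le_induction_single with
  | refl c => exact ⟨y, hy, by rw [shiftMonomial_self, one_smul]⟩
  | step c d j hcd hj hle ih =>
    obtain ⟨x', hx', rfl⟩ :=
      ih (hg.trans (le_add_of_nonneg_right (Pi.single_nonneg.mpr zero_le_one))) hy
    obtain ⟨x, hx, rfl⟩ := (hM.2 j c (Pi.le_apply_of_inf_le_of_lt hg hj)).2 x' hx'
    exact ⟨x, hx, by rw [shiftMonomial_eq_mul_X hle, mul_smul]⟩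

end Graded

def InCone (s : Fin n → ℤ) (Z : Finset (Fin n)) (d : Fin n → ℤ) : Prop :=
  s ≤ d ∧ ∀ j ∉ Z, d j = s j

noncomputable def coneEquiv (s : Fin n → ℤ) (Z : Finset (Fin n)) :
    {d // InCone s Z d} ≃ {t : Fin n →₀ ℕ // ∀ j ∉ Z, t j = 0} where
  toFun d := ⟨Finsupp.equivFunOnFinite.symm fun j => (d.1 j - s j).toNat,
    fun j hj => by simp [d.2.2 j hj]⟩
  invFun t := ⟨s + fun j => (t.1 j : ℤ), fun j => by simp, fun j hj => by simp [t.2 j hj]⟩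
  left_inv d := Subtype.ext <| funext fun j => by
    have h : s j ≤ d.1 j := d.2.1 j
    simp only [Finsupp.coe_equivFunOnFinite_symm, Pi.add_apply]
    omega
  right_inv t := Subtype.ext <| Finsupp.ext fun j => by simp

section Stanley

omit [IsScalarTower K (MvPolynomial (Fin n) K) M] in
theorem stanleySpace_eq_span (x : M) (s : Fin n → ℤ) (Z : Finset (Fin n)) :
    stanleySpace K x Z =
      Submodule.span K (Set.range fun d : {d // InCone s Z d} => shiftMonomial K s d • x) := by
  rw [stanleySpace, Set.image_eq_range, ← (coneEquiv s Z).surjective.range_comp]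
  rfl

theorem MvPolynomial.toSubmodule_supported_eq_restrictSupport {R σ : Type*} [CommSemiring R]
    (Z : Set σ) :
    Subalgebra.toSubmodule (supported R Z) = restrictSupport R {t | ∀ j ∉ Z, t j = 0} := by
  ext q
  simp only [Subalgebra.mem_toSubmodule, mem_supported, mem_restrictSupport_iff,
    Set.subset_def, Finset.mem_coe, mem_vars_iff_mem_support, Set.mem_ofPred_eq]
  constructor
  · intro h t ht j hj
    by_contra h0
    exact hj (h j ⟨t, ht, Finsupp.mem_support_iff.mpr h0⟩)
  · rintro h j ⟨t, ht, hjt⟩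
    by_contra hj
    exact Finsupp.mem_support_iff.mp hjt (h t ht j hj)

theorem free_iff_linearIndependent (x : M) (s : Fin n → ℤ) (Z : Finset (Fin n)) :
    (∀ q ∈ supported K (Z : Set (Fin n)), q • x = 0 → q = 0) ↔
      LinearIndependent K fun d : {d // InCone s Z d} => shiftMonomial K s d • x := by
  let v : {d // InCone s Z d} → MvPolynomial (Fin n) K := fun d => shiftMonomial K s d
  have hv : LinearIndependent K v := by
    have := (basisMonomials (Fin n) K).linearIndependent.comp _
      (Subtype.val_injective.comp (coneEquiv s Z).injective)
    rwa [coe_basisMonomials] at this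
  have hspan : Submodule.span K (Set.range v) = Subalgebra.toSubmodule (supported K ↑Z) := by
    rw [toSubmodule_supported_eq_restrictSupport, restrictSupport_eq_span, Set.image_eq_range,
      ← (coneEquiv s Z).surjective.range_comp]
    rfl
  let f := (LinearMap.toSpanSingleton (MvPolynomial (Fin n) K) M x).restrictScalars K
  change _ ↔ LinearIndependent K (f ∘ v)
  have hfree : (∀ q ∈ supported K (Z : Set (Fin n)), q • x = 0 → q = 0) ↔
      Disjoint (Submodule.span K (Set.range v)) (LinearMap.ker f) := by
    rw [hspan, LinearMap.disjoint_ker]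
    rfl
  rw [hfree]
  exact ⟨fun h => (f.linearIndependent_iff_of_disjoint h).mpr hv, Submodule.range_ker_disjoint⟩

end Stanley

section StanleyFamily

variable {ι : Type*} (Z : ι → Finset (Fin n)) (s : ι → Fin n → ℤ) (m : ι → M)

variable (K) in
noncomputable def stanleyFamily : (Σ i, {d // InCone (s i) (Z i) d}) → M :=
  fun p => shiftMonomial K (s p.1) p.2 • m p.1

variable (K) in
noncomputable def stanleyFamilyAt (d : Fin n → ℤ) : {i // InCone (s i) (Z i) d} → M :=
  fun i => shiftMonomial K (s i) d • m i

def coneIndexOfDeg (d : Fin n → ℤ) :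
    {i // InCone (s i) (Z i) d} → Σ i, {d // InCone (s i) (Z i) d} :=
  fun i => ⟨i.1, d, i.2⟩

theorem coneIndexOfDeg_injective (d : Fin n → ℤ) : Function.Injective (coneIndexOfDeg Z s d) :=
  fun _ _ h => Subtype.ext (congrArg Sigma.fst h)

theorem range_coneIndexOfDeg (d : Fin n → ℤ) :
    Set.range (coneIndexOfDeg Z s d) = {p | p.2.1 = d} := by
  ext ⟨i, e, he⟩
  constructor
  · rintro ⟨_, hj⟩
    cases hj
    rfl
  · rintro (rfl : e = d)
    exact ⟨⟨i, he⟩, rfl⟩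

omit [IsScalarTower K (MvPolynomial (Fin n) K) M] in
theorem stanleySpace_eq_span_image (i : ι) :
    stanleySpace K (m i) (Z i) = Submodule.span K (stanleyFamily K Z s m '' {p | p.1 = i}) := by
  have hfiber : {p : Σ i, {d // InCone (s i) (Z i) d} | p.1 = i} = Set.range (Sigma.mk i) :=
    (Set.range_sigmaMk i).symm
  rw [stanleySpace_eq_span _ (s i), hfiber, ← Set.range_comp]
  rfl

theorem free_iff_linearIndepOn (i : ι) :
    (∀ q ∈ supported K (Z i : Set (Fin n)), q • m i = 0 → q = 0) ↔
      LinearIndepOn K (stanleyFamily K Z s m) {p | p.1 = i} := by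
  have hfiber : {p : Σ i, {d // InCone (s i) (Z i) d} | p.1 = i} = Set.range (Sigma.mk i) :=
    (Set.range_sigmaMk i).symm
  rw [free_iff_linearIndependent _ (s i), hfiber, linearIndepOn_range_iff sigma_mk_injective]
  rfl

theorem isStanleyDecomp_iff {gr : (Fin n → ℤ) → Submodule K M} [Fintype ι] :
    IsStanleyDecomp gr Z s m ↔ (∀ i, m i ∈ gr (s i)) ∧
      LinearIndependent K (stanleyFamily K Z s m) ∧
      Submodule.span K (Set.range (stanleyFamily K Z s m)) = ⊤ := by
  have hpieces := stanleySpace_eq_span_image (K := K) Z s m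
  have hsup : ⨆ i, stanleySpace K (m i) (Z i) =
      Submodule.span K (Set.range (stanleyFamily K Z s m)) := by
    simp_rw [hpieces]
    exact iSup_span_image_fiber _ Sigma.fst
  rw [IsStanleyDecomp, hsup]
  refine and_congr_right fun _ => ⟨fun ⟨hfree, hind, htop⟩ => ⟨?_, htop⟩,
    fun ⟨hli, htop⟩ => ⟨?_, iSupIndep_of_linearIndependent hli hpieces, htop⟩⟩
  · refine linearIndependent_of_iSupIndep (φ := Sigma.fst) hind (fun p => ?_)
      fun i => (free_iff_linearIndepOn Z s m i).mp (hfree i)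
    rw [hpieces]
    exact Submodule.subset_span ⟨p, rfl, rfl⟩
  · exact fun i => (free_iff_linearIndepOn Z s m i).mpr (hli.linearIndepOn _)

end StanleyFamily

section Degreewise

variable {ι : Type*} [Fintype ι] {gr : (Fin n → ℤ) → Submodule K M}
  {Z : ι → Finset (Fin n)} {s : ι → Fin n → ℤ} {m : ι → M}

omit [Fintype ι] [IsScalarTower K (MvPolynomial (Fin n) K) M] in
theorem stanleyFamily_mem (hsmul : GradedSMul gr) (hm : ∀ i, m i ∈ gr (s i))
    (p : Σ i, {d // InCone (s i) (Z i) d}) : stanleyFamily K Z s m p ∈ gr p.2 :=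
  shiftMonomial_smul_mem hsmul p.2.2.1 (hm p.1)

theorem IsStanleyDecomp.linearIndependent_of_deg (hF : IsStanleyDecomp gr Z s m)
    (d : Fin n → ℤ) : LinearIndependent K (stanleyFamilyAt K Z s m d) :=
  ((isStanleyDecomp_iff Z s m).mp hF).2.1.comp (coneIndexOfDeg Z s d)
    (coneIndexOfDeg_injective Z s d)

theorem IsStanleyDecomp.span_of_deg [DirectSum.Decomposition gr] (hsmul : GradedSMul gr)
    (hF : IsStanleyDecomp gr Z s m) (d : Fin n → ℤ) :
    Submodule.span K (Set.range (stanleyFamilyAt K Z s m d)) = gr d := by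
  obtain ⟨hm, -, htop⟩ := (isStanleyDecomp_iff Z s m).mp hF
  rw [show stanleyFamilyAt K Z s m d = stanleyFamily K Z s m ∘ coneIndexOfDeg Z s d from rfl,
    Set.range_comp, range_coneIndexOfDeg]
  exact span_image_fiber_eq (DirectSum.Decomposition.isInternal gr).submodule_iSupIndep
    (stanleyFamily_mem hsmul hm) htop d

theorem isStanleyDecomp_of_deg [DirectSum.Decomposition gr] (hsmul : GradedSMul gr)
    (hm : ∀ i, m i ∈ gr (s i))
    (hdeg : ∀ d, LinearIndependent K (stanleyFamilyAt K Z s m d) ∧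
      gr d ≤ Submodule.span K (Set.range (stanleyFamilyAt K Z s m d))) :
    IsStanleyDecomp gr Z s m := by
  have hinternal := DirectSum.Decomposition.isInternal gr
  have hfiber : ∀ d, Set.range (stanleyFamilyAt K Z s m d) =
      stanleyFamily K Z s m '' {p | p.2.1 = d} := fun d => by
    rw [← range_coneIndexOfDeg, ← Set.range_comp]
    rfl
  refine (isStanleyDecomp_iff Z s m).mpr ⟨hm, ?_, ?_⟩
  · refine linearIndependent_of_iSupIndep hinternal.submodule_iSupIndep
      (stanleyFamily_mem hsmul hm) fun d => ?_
    rw [← range_coneIndexOfDeg, linearIndepOn_range_iff (coneIndexOfDeg_injective Z s d)]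
    exact (hdeg d).1
  · rw [← iSup_span_image_fiber _ fun p => p.2.1, eq_top_iff,
      ← hinternal.submodule_iSup_eq_top]
    exact iSup_mono fun d => (hdeg d).2.trans_eq (congrArg _ (hfiber d))

theorem IsStanleyDecomp.isHilbertDecomp [DirectSum.Decomposition gr] (hsmul : GradedSMul gr)
    (hF : IsStanleyDecomp gr Z s m) : IsHilbertDecomp gr Z s := by
  classical
  intro c
  have hli := hF.linearIndependent_of_deg c
  rw [← hF.span_of_deg hsmul c, rank_span hli, Cardinal.mk_fintype,
    Set.card_range_of_injective hli.injective, Fintype.card_subtype]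
  congr 2
  ext i
  simp [InCone, Pi.le_def]

end Degreewise

def upperCorner (g : Fin n → ℤ) (Z : Finset (Fin n)) (s : Fin n → ℤ) : Fin n → ℤ :=
  fun j => if j ∈ Z then g j else s j

section UpperCorner

variable {g s : Fin n → ℤ} {Z : Finset (Fin n)}

theorem le_upperCorner (hs : s ≤ g) : s ≤ upperCorner g Z s := fun j => by
  unfold upperCorner; split_ifs <;> simp [hs j]

theorem upperCorner_le (hs : s ≤ g) : upperCorner g Z s ≤ g := fun j => by
  unfold upperCorner; split_ifs <;> simp [hs j]

theorem upperCorner_eq_of_ne {j : Fin n} (hj : upperCorner g Z s j ≠ g j) :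
    upperCorner g Z s j = s j := by
  unfold upperCorner at *
  split_ifs at * <;> simp_all

theorem mem_zset_upperCorner {j : Fin n} :
    j ∈ Zset g (upperCorner g Z s) ↔ j ∈ Z ∨ s j = g j := by
  by_cases hj : j ∈ Z <;> simp [Zset, upperCorner, hj]

theorem subset_zset_upperCorner : Z ⊆ Zset g (upperCorner g Z s) := fun _ hj =>
  mem_zset_upperCorner.mpr (Or.inl hj)

theorem inCone_zset_upperCorner_iff (hs : s ≤ g) {d : Fin n → ℤ} :
    InCone s (Zset g (upperCorner g Z s)) d ↔ InCone s Z (d ⊓ g) := by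
  constructor
  · rintro ⟨hsd, hd⟩
    refine ⟨le_inf hsd hs, fun j hj => ?_⟩
    have hsdj : s j ≤ d j := hsd j
    have hsgj : s j ≤ g j := hs j
    by_cases hsg : s j = g j
    · simp only [Pi.inf_apply]
      omega
    · have := hd j (by simp [mem_zset_upperCorner, hj, hsg])
      simp only [Pi.inf_apply]
      omega
  · rintro ⟨hsd, hd⟩
    refine ⟨hsd.trans inf_le_left, fun j hj => ?_⟩
    rw [mem_zset_upperCorner, not_or] at hj
    have hdj := hd j hj.1
    have hsgj : s j ≤ g j := hs j
    simp only [Pi.inf_apply] at hdj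
    omega

end UpperCorner

def saturateConeEquiv (g : Fin n → ℤ) {ι : Type*} (Z : ι → Finset (Fin n))
    (s : ι → Fin n → ℤ) (d : Fin n → ℤ) :
    {i : {i // s i ≤ g} // InCone (s i) (Zset g (upperCorner g (Z i) (s i))) d} ≃
      {i // InCone (s i) (Z i) (d ⊓ g)} :=
  (Equiv.subtypeSubtypeEquivSubtypeInter _ _).trans <| Equiv.subtypeEquivRight fun _ =>
    ⟨fun h => (inCone_zset_upperCorner_iff h.1).mp h.2, fun h =>
      ⟨h.1.trans inf_le_right, (inCone_zset_upperCorner_iff (h.1.trans inf_le_right)).mpr h⟩⟩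

open scoped Classical in
theorem IsStanleyDecomp.restrict_saturate {ι : Type*} [Fintype ι]
    {gr : (Fin n → ℤ) → Submodule K M} [DirectSum.Decomposition gr] (hsmul : GradedSMul gr)
    {g : Fin n → ℤ} (hM : PosDetermined gr g) {Z : ι → Finset (Fin n)}
    {s : ι → Fin n → ℤ} {m : ι → M} (hF : IsStanleyDecomp gr Z s m) :
    IsStanleyDecomp gr (fun i : {i // s i ≤ g} => Zset g (upperCorner g (Z i) (s i)))
      (fun i => s i) (fun i => m i) := by
  refine isStanleyDecomp_of_deg hsmul (fun i : {i // s i ≤ g} => hF.1 i) fun d => ?_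
  let f : M →ₗ[K] M := DistribSMul.toLinearMap K M (shiftMonomial K (d ⊓ g) d)
  have hfamily : stanleyFamilyAt K _ _ (fun i : {i // s i ≤ g} => m i) d =
      (f ∘ stanleyFamilyAt K Z s m (d ⊓ g)) ∘ saturateConeEquiv g Z s d := funext fun i => by
    simp only [stanleyFamilyAt, Function.comp_apply, f, DistribSMul.toLinearMap_apply,
      ← mul_smul]
    rw [shiftMonomial_mul (saturateConeEquiv g Z s d i).2.1 inf_le_left]
    rfl
  have hspan := hF.span_of_deg hsmul (d ⊓ g)
  rw [hfamily, linearIndependent_equiv, (saturateConeEquiv g Z s d).surjective.range_comp,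
    Set.range_comp, Submodule.span_image, hspan]
  refine ⟨(hF.linearIndependent_of_deg (d ⊓ g)).map ?_, fun y hy => ?_⟩
  · rw [hspan, LinearMap.disjoint_ker]
    exact fun x hx => eq_zero_of_shiftMonomial_smul_eq_zero hsmul hM inf_le_left le_rfl hx
  · obtain ⟨x, hx, rfl⟩ := exists_shiftMonomial_smul_eq hM inf_le_left le_rfl hy
    exact Submodule.mem_map_of_mem hx

section StanleyDecomp

variable {ι : Type*} [Fintype ι] {gr : (Fin n → ℤ) → Submodule K M}
  {Z : ι → Finset (Fin n)} {s : ι → Fin n → ℤ} {m : ι → M}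

omit [IsScalarTower K (MvPolynomial (Fin n) K) M]

theorem IsStanleyDecomp.comp_bijective (hF : IsStanleyDecomp gr Z s m) {ι' : Type*}
    [Fintype ι'] {f : ι' → ι} (hf : Function.Bijective f) :
    IsStanleyDecomp gr (Z ∘ f) (s ∘ f) (m ∘ f) :=
  ⟨fun i => hF.1 (f i), fun i => hF.2.1 (f i), hF.2.2.1.comp hf.injective,
    (hf.surjective.iSup_comp fun i => stanleySpace K (m i) (Z i)).trans hF.2.2.2⟩

theorem IsStanleyDecomp.sigma_singleton (hF : IsStanleyDecomp gr Z s m)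
    {G : ι → Finset (Fin n → ℤ)} (hG : ∀ i, G i = {s i}) :
    IsStanleyDecomp gr (fun p : Σ i, {w // w ∈ G i} => Z p.1) (fun p => p.2) (fun p => m p.1) := by
  have hdeg : ∀ p : Σ i, {w // w ∈ G i}, (p.2 : Fin n → ℤ) = s p.1 := fun p =>
    Finset.mem_singleton.mp (hG p.1 ▸ p.2.2)
  have hfst : Function.Bijective (Sigma.fst : (Σ i, {w // w ∈ G i}) → ι) :=
    ⟨fun p q h => Sigma.subtype_ext h (by rw [hdeg, hdeg, h]),
      fun i => ⟨⟨i, s i, by simp [hG]⟩, rfl⟩⟩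
  obtain ⟨hm, hfree, hind, htop⟩ := hF.comp_bijective hfst
  exact ⟨fun p => by simp only [hdeg p]; exact hm p, hfree, hind, htop⟩

theorem IsStanleyDecomp.ne_zero (hF : IsStanleyDecomp gr Z s m) (i : ι) : m i ≠ 0 := fun h =>
  one_ne_zero (hF.2.1 i 1 (one_mem _) (by rw [h, smul_zero]))

theorem IsStanleyDecomp.nonneg (hF : IsStanleyDecomp gr Z s m)
    (hneg : ∀ a : Fin n → ℤ, ¬ 0 ≤ a → gr a = ⊥) (i : ι) : 0 ≤ s i := by
  by_contra h
  simpa [hneg _ h, hF.ne_zero i] using hF.1 i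

end StanleyDecomp

section HilbertPartition

variable {g a b : Fin n → ℤ}

theorem gset_eq_singleton (hab : a ≤ b) (hcorner : ∀ j, b j ≠ g j → b j = a j) :
    Gset g a b = {a} := by
  ext c
  simp only [Gset, Finset.mem_filter, Finset.mem_Icc, Finset.mem_singleton]
  constructor
  · rintro ⟨⟨hac, hcb⟩, hc⟩
    funext j
    by_cases hj : b j = g j
    · exact hc j hj
    · have h1 : a j ≤ c j := hac j
      have h2 : c j ≤ b j := hcb j
      have h3 := hcorner j hj
      omega
  · rintro rfl
    exact ⟨⟨le_rfl, hab⟩, fun _ _ => rfl⟩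

omit [Module (MvPolynomial (Fin n) K) M] [IsScalarTower K (MvPolynomial (Fin n) K) M] in
theorem IsHilbertDecomp.isHilbertPartition {gr : (Fin n → ℤ) → Submodule K M} {r : ℕ}
    {a b : Fin r → Fin n → ℤ} (h : IsHilbertDecomp gr (fun k => Zset g (b k)) a)
    (hab : ∀ k, 0 ≤ a k ∧ a k ≤ b k ∧ b k ≤ g)
    (hcorner : ∀ k j, b k j ≠ g j → b k j = a k j) :
    IsHilbertPartition gr g a b := by
  refine ⟨hab, fun c _ hcg => ?_⟩
  rw [h c]
  congr 2
  ext k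
  simp only [Finset.mem_filter, Finset.mem_univ, true_and, Zset]
  refine and_congr_right fun hac => ⟨fun hc j => ?_, fun hcb j hj => ?_⟩
  · by_cases hj : b k j = g j
    · exact hj ▸ hcg j
    · exact (hc j (by simpa using hj)).trans_le ((hab k).2.1 j)
  · have h1 := hcorner k j hj
    have h2 : a k j ≤ c j := hac j
    have h3 := hcb j
    omega

end HilbertPartition

theorem exists_stanleyDecomposition_from_hilbertPartition_general
    (gr : (Fin n → ℤ) → Submodule K M) [DirectSum.Decomposition gr]
    (hsmul : GradedSMul gr)
    (g : Fin n → ℤ)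
    (hM : PosDetermined gr g)
    {ι : Type*} [Fintype ι]
    (Z' : ι → Finset (Fin n)) (s' : ι → Fin n → ℤ) (m' : ι → M)
    (hF : IsStanleyDecomp gr Z' s' m') :
    ∃ (r : ℕ) (a b : Fin r → Fin n → ℤ),
      IsHilbertPartition gr g a b ∧
      ∃ m : (Σ i : Fin r, {w // w ∈ Gset g (a i) (b i)}) → M,
        (∀ p, m p ∈ gr (p.2 : Fin n → ℤ)) ∧ (∀ p, m p ≠ 0) ∧
        IsStanleyDecomp gr (fun p => Zset g (b p.1)) (fun p => (p.2 : Fin n → ℤ)) m ∧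
        ∀ p : (Σ i : Fin r, {w // w ∈ Gset g (a i) (b i)}),
          sInf {d | ∃ i : ι, d = (Z' i).card} ≤ (Zset g (b p.1)).card := by
  classical
  let e := (Fintype.equivFin {i // s' i ≤ g}).symm
  let a := fun k => s' (e k)
  let b := fun k => upperCorner g (Z' (e k)) (s' (e k))
  have hab : ∀ k, 0 ≤ a k ∧ a k ≤ b k ∧ b k ≤ g := fun k =>
    ⟨hF.nonneg hM.1 _, le_upperCorner (e k).2, upperCorner_le (e k).2⟩
  have hcorner : ∀ k j, b k j ≠ g j → b k j = a k j := fun _ _ => upperCorner_eq_of_ne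
  have hD : IsStanleyDecomp gr (fun k => Zset g (b k)) a (fun k => m' (e k)) :=
    (hF.restrict_saturate hsmul hM).comp_bijective e.bijective
  have hP := hD.sigma_singleton fun k => gset_eq_singleton (hab k).2.1 (hcorner k)
  refine ⟨_, a, b, (hD.isHilbertDecomp hsmul).isHilbertPartition hab hcorner, _, hP.1,
    hP.ne_zero, hP, fun p => ?_⟩
  have hmem : (Z' (e p.1)).card ∈ {d | ∃ i : ι, d = (Z' i).card} := ⟨e p.1, rfl⟩
  exact (Nat.sInf_le hmem).trans (Finset.card_le_card subset_zset_upperCorner)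

/-- **Theorem.**  Let `M` be a finitely generated multigraded `R`-module, positively
`g`-determined, and let `𝔉 : M = ⊕_{i} m'ᵢ K[Z'ᵢ]` be any Stanley decomposition of
`M`.  Then there exist a Hilbert partition `𝔓 : H_M(X)_{⪯g} = Σᵢ Q[aⁱ,bⁱ](X)`, whose
induced Hilbert decomposition is `𝔇(𝔓) : M ≅ ⊕_{p∈I} K[Z_{b^{p₁}}](−p₂)` with
`I = {(i,c) : c ∈ 𝓖[aⁱ,bⁱ]}`, and nonzero homogeneous elements `m_p ∈ M_{p₂}`, such
that `M = ⊕_{p∈I} m_p K[Z_{b^{p₁}}]` is a Stanley decomposition of `M` whose depth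
(the minimum of the `|Z_{b^{p₁}}|`) is at least the depth `min_i |Z'ᵢ|` of `𝔉`. -/
theorem exists_stanleyDecomposition_from_hilbertPartition
    (gr : (Fin n → ℤ) → Submodule K M) [DirectSum.Decomposition gr]
    (hsmul : GradedSMul gr) [Module.Finite (MvPolynomial (Fin n) K) M]
    (g : Fin n → ℤ) (hg : (0 : Fin n → ℤ) ≤ g)
    (hM : PosDetermined gr g)
    {ι : Type*} [Fintype ι] [Nonempty ι]
    (Z' : ι → Finset (Fin n)) (s' : ι → Fin n → ℤ) (m' : ι → M)
    (hF : IsStanleyDecomp gr Z' s' m') :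
    ∃ (r : ℕ) (a b : Fin r → Fin n → ℤ),
      IsHilbertPartition gr g a b ∧
      ∃ m : (Σ i : Fin r, {w // w ∈ Gset g (a i) (b i)}) → M,
        (∀ p, m p ∈ gr (p.2 : Fin n → ℤ)) ∧ (∀ p, m p ≠ 0) ∧
        IsStanleyDecomp gr (fun p => Zset g (b p.1)) (fun p => (p.2 : Fin n → ℤ)) m ∧
        ∀ p : (Σ i : Fin r, {w // w ∈ Gset g (a i) (b i)}),
          sInf {d | ∃ i : ι, d = (Z' i).card} ≤ (Zset g (b p.1)).card :=
  exists_stanleyDecomposition_from_hilbertPartition_general gr hsmul g hM Z' s' m' hF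
end
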